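/- Define Θ_t := t²/2 + it∇ℓ + Ω in the (complexified) bigraded algebra, where ℓ is a unit section of a Euclidean bundle E with metric connection ∇ and curvature Ω. Then for any smooth function f: ℝ → ℝ, extended by the formal Taylor expansion f(Θ_t) := Σ_{k≥0} f^{(k)}(t²/2)/k! · (it∇ℓ + Ω)^k, one has (∇ - it ι(ℓ)) f(Θ_t) = 0. -/

import Mathlib

open scoped BigOperators
open Finset

noncomputable section

/-- Abstract model of the bigraded algebra `𝒜 = ⊕_{i,j} 𝒜^{i,j}` of smooth sections of
`Λ^i T*N ⊗ Λ^j E` over a manifold `N`, where `E` is an oriented Euclidean vector bundle of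
rank `n` carrying a metric connection `∇` (`nabla`) with curvature `Ω ∈ 𝒜^{2,2}` (via the
identification `so(E) ≅ Λ²E`), a distinguished unit section `ℓ ∈ 𝒜^{0,1}`, the contraction
operator `ι(ℓ)` (`iota`), and the Berezin integral `Ber`.  In the application of the paper,
`N = SM` is the projective sphere bundle of a Finsler manifold `(M,F)`, `E = π^*TM` with the
induced Riemannian metric `g`, and `∇` is the Cartan connection. -/
structure Model where
  R : Type
  [ringR : Ring R]
  [algR : Algebra ℂ R]
  /-- the bigraded pieces `𝒜^{i,j}` -/
  A : ℕ → ℕ → Submodule ℂ R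
  mul_mem : ∀ {i j k l : ℕ} {x y : R}, x ∈ A i j → y ∈ A k l → x * y ∈ A (i + k) (j + l)
  /-- forms of degree larger than the dimension of the base manifold vanish -/
  dimBound : ℕ
  A_top : ∀ i j : ℕ, dimBound < i → A i j = ⊥
  /-- projection onto the bigraded component `𝒜^{i,j}` -/
  proj : ℕ → ℕ → (R →ₗ[ℂ] R)
  proj_mem : ∀ (i j : ℕ) (x : R), proj i j x ∈ A i j
  proj_of_mem : ∀ {i j : ℕ} {x : R}, x ∈ A i j → proj i j x = x
  /-- the rank of `E` -/
  n : ℕ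
  npos : 0 < n
  /-- the metric connection, extended to `𝒜` by `∇(a⊗b) = da⊗b + (-1)^i a∧∇b`;
  on `𝒜^{•,0}` it is the de Rham differential `d`. -/
  nabla : R →ₗ[ℂ] R
  nabla_mem : ∀ {i j : ℕ} {x : R}, x ∈ A i j → nabla x ∈ A (i + 1) j
  /-- contraction with the distinguished section `ℓ` -/
  iota : R →ₗ[ℂ] R
  iota_mem : ∀ {i j : ℕ} {x : R}, x ∈ A i j → iota x ∈ A i (j - 1)
  /-- the distinguished unit section `ℓ` -/
  ell : R
  ell_mem : ell ∈ A 0 1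
  /-- the curvature of `∇`, viewed in `𝒜^{2,2}` -/
  Omega : R
  Omega_mem : Omega ∈ A 2 2
  /-- the Berezin integral -/
  Ber : R →ₗ[ℂ] R
  Ber_mem : ∀ {i j : ℕ} {x : R}, x ∈ A i j → Ber x ∈ A i 0

attribute [instance] Model.ringR Model.algR

namespace Model

variable (M : Model)

/-- `it∇ℓ + Ω` -/
def W (t : ℝ) : M.R := ((t : ℂ) * Complex.I) • M.nabla M.ell + M.Omega

/-- `Θ_t = t²/2 + it∇ℓ + Ω` -/
def Theta (t : ℝ) : M.R := algebraMap ℂ M.R ((t : ℂ) ^ 2 / 2) + M.W t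

/-- the exponential `exp x = Σ_k x^k/k!` (the series terminates by nilpotency). -/
def expn (x : M.R) : M.R :=
  ∑ k ∈ Finset.range (M.dimBound + 2), ((Nat.factorial k : ℂ))⁻¹ • x ^ k

/-- `e^{-Θ_t} = e^{-t²/2}·exp(-(it∇ℓ+Ω))` -/
def expNegTheta (t : ℝ) : M.R := ((Real.exp (-(t ^ 2 / 2)) : ℝ) : ℂ) • M.expn (-(M.W t))

/-- `U_t = B(e^{-Θ_t})` -/
def U (t : ℝ) : M.R := M.Ber (M.expNegTheta t)

/-- the Pfaffian `Pf(-Ω) = B(exp(-Ω))` -/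
def Pf : M.R := M.Ber (M.expn (-M.Omega))

/-- the Euler form `Ω^∇ = -(2π)^{-n/2} Pf(-Ω)` -/
def OmegaD : M.R := -((((2 * Real.pi) ^ ((M.n : ℝ) / 2) : ℝ) : ℂ))⁻¹ • M.Pf

/-- functional calculus `f(Θ_t) = Σ_k f^{(k)}(t²/2)/k! (it∇ℓ+Ω)^k` -/
def fCalc (f : ℝ → ℝ) (t : ℝ) : M.R :=
  ∑ k ∈ Finset.range (M.dimBound + 2),
    (((iteratedDeriv k f (t ^ 2 / 2) / Nat.factorial k : ℝ)) : ℂ) • M.W t ^ k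

/-- inclusion of Greek indices `1,…,n-1` into `1,…,n` -/
def emb (a : Fin (M.n - 1)) : Fin M.n := ⟨a.1, lt_of_lt_of_le a.2 (Nat.sub_le _ _)⟩

/-- the last index `n`, corresponding to `e_n = ℓ` -/
def lastIdx : Fin M.n := ⟨M.n - 1, by have := M.npos; omega⟩

/-- ordered product `e_{σ(1)} ⋯ e_{σ(j)}` of frame sections -/
def prodE (e : Fin M.n → M.R) {j : ℕ} (σ : Fin j → Fin M.n) : M.R :=
  (List.ofFn fun m => e (σ m)).prod

/-- `Φ_k = Σ ε_{α₁…α_{n-1}} Ω_{α₁}^{α₂}∧⋯∧Ω_{α_{2k-1}}^{α_{2k}}∧ϖ_{α_{2k+1}}^n∧⋯∧ϖ_{α_{n-1}}^n`,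
expressed as a signed sum over permutations of the `n-1` Greek indices. -/
def Phi (ϖ Om : Fin M.n → Fin M.n → M.R) (k : ℕ) : M.R :=
  if h : 0 < M.n - 1 then
    ∑ σ : Equiv.Perm (Fin (M.n - 1)),
      ((Equiv.Perm.sign σ : ℤ) : ℂ) •
        ((List.ofFn fun a : Fin k =>
            Om (M.emb (σ ⟨(2 * a.1) % (M.n - 1), Nat.mod_lt _ h⟩))
               (M.emb (σ ⟨(2 * a.1 + 1) % (M.n - 1), Nat.mod_lt _ h⟩))).prod *
         (List.ofFn fun b : Fin (M.n - 1 - 2 * k) =>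
            ϖ (M.emb (σ ⟨(2 * k + b.1) % (M.n - 1), Nat.mod_lt _ h⟩)) M.lastIdx).prod)
  else 0

/-- the coefficient `(-1)^k 2^{n/2} Γ((n-2k)/2) / (k!(n-1-2k)! 2^{2k+1})` -/
def coeffC (k : ℕ) : ℂ :=
  (((-1 : ℝ) ^ k * (2 : ℝ) ^ ((M.n : ℝ) / 2) * Real.Gamma (((M.n : ℝ) - 2 * k) / 2) /
    ((Nat.factorial k) * (Nat.factorial (M.n - 1 - 2 * k)) * 2 ^ (2 * k + 1)) : ℝ) : ℂ)

/-- the primitive `Σ_{k=0}^{⌊(n-1)/2⌋} (-1)^k 2^{n/2} Φ_k Γ((n-2k)/2)/(k!(n-1-2k)!2^{2k+1})` -/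
def Primitive (ϖ Om : Fin M.n → Fin M.n → M.R) : M.R :=
  ∑ k ∈ Finset.range ((M.n - 1) / 2 + 1), M.coeffC k • M.Phi ϖ Om k

/-- `vol(S^{n-1}) = 2π^{n/2}/Γ(n/2)` -/
def volS : ℝ := 2 * Real.pi ^ ((M.n : ℝ) / 2) / Real.Gamma ((M.n : ℝ) / 2)

/-- `Υ₁ = ((-1)^n/(2π^{n/2})) (Φ₀/(n-1)!) Γ(n/2)` -/
def Upsilon1 (ϖ Om : Fin M.n → Fin M.n → M.R) : M.R :=
  (((-1 : ℝ) ^ M.n / (2 * Real.pi ^ ((M.n : ℝ) / 2)) * Real.Gamma ((M.n : ℝ) / 2) /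
      Nat.factorial (M.n - 1) : ℝ) : ℂ) • M.Phi ϖ Om 0

/-- `Υ₂ = ((-1)^n/π^{n/2}) Σ_{k=1}^{⌊(n-1)/2⌋} (-1)^k Φ_k Γ((n-2k)/2)/(k!(n-1-2k)!2^{2k+1})` -/
def Upsilon2 (ϖ Om : Fin M.n → Fin M.n → M.R) : M.R :=
  (((-1 : ℝ) ^ M.n / Real.pi ^ ((M.n : ℝ) / 2) : ℝ) : ℂ) •
    ∑ k ∈ Finset.Icc 1 ((M.n - 1) / 2),
      ((((-1 : ℝ) ^ k * Real.Gamma (((M.n : ℝ) - 2 * k) / 2) /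
          ((Nat.factorial k) * (Nat.factorial (M.n - 1 - 2 * k)) * 2 ^ (2 * k + 1)) : ℝ)) : ℂ) •
        M.Phi ϖ Om k

/-- the correction form `𝔇 = -dΥ₂ - d log V ∧ Υ₁`, where `d log V = V⁻¹ dV`. -/
def frakD (Vol VolInv : M.R) (ϖ Om : Fin M.n → Fin M.n → M.R) : M.R :=
  -(M.nabla (M.Upsilon2 ϖ Om)) - (VolInv * M.nabla Vol) * M.Upsilon1 ϖ Om

end Model
/-- Proposition 3.2.  With `Θ_t = t²/2 + it∇ℓ + Ω` and the functional
calculus `f(Θ_t) = Σ_k f^{(k)}(t²/2)/k! (it∇ℓ+Ω)^k`, one has `(∇ - itι(ℓ)) f(Θ_t) = 0`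
for every smooth `f : ℝ → ℝ`.  The hypotheses record the context: `∇` and `ι(ℓ)` are graded
derivations, `ι(ℓ)∇ℓ = 0`, `∇∇ℓ = ι(ℓ)Ω`, `ι(ℓ)ℓ = 1`, and `∇Ω = 0` (Bianchi). -/
theorem statement4 (M : Model)
    (hnabla_deriv : ∀ {i j : ℕ} {x : M.R}, x ∈ M.A i j → ∀ {k l : ℕ} {y : M.R},
      y ∈ M.A k l →
      M.nabla (x * y) = M.nabla x * y + ((-1 : ℂ) ^ (i + j)) • (x * M.nabla y))
    (hiota_deriv : ∀ {i j : ℕ} {x : M.R}, x ∈ M.A i j → ∀ {k l : ℕ} {y : M.R},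
      y ∈ M.A k l →
      M.iota (x * y) = M.iota x * y + ((-1 : ℂ) ^ (i + j)) • (x * M.iota y))
    (h1 : M.iota (M.nabla M.ell) = 0)
    (h2 : M.nabla (M.nabla M.ell) = M.iota M.Omega)
    (h3 : M.iota M.ell = 1)
    (hBianchi : M.nabla M.Omega = 0)
    (f : ℝ → ℝ) (hf : ContDiff ℝ (⊤ : ℕ∞) f) (t : ℝ) :
    M.nabla (M.fCalc f t) - ((t : ℂ) * Complex.I) • M.iota (M.fCalc f t) = 0 := by
  classical
  set s : ℂ := (t : ℂ) * Complex.I with hs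
  have hone : (1 : M.R) ∈ M.A 0 0 := by
    have h := M.iota_mem M.ell_mem
    rw [h3] at h
    simpa using h
  have hn1 : M.nabla (1 : M.R) = 0 := by
    have h := hnabla_deriv hone hone
    norm_num at h
    exact h
  have hi1 : M.iota (1 : M.R) = 0 := by
    have h := hiota_deriv hone hone
    norm_num at h
    exact h
  set T : Submodule ℂ M.R := ⨆ p : ℕ × ℕ, M.A p.1 p.2 with hT
  have hmemT : ∀ {i j : ℕ} {x : M.R}, x ∈ M.A i j → x ∈ T := by
    intro i j x hx
    exact Submodule.mem_iSup_of_mem (i, j) hx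
  have ha : s • M.nabla M.ell ∈ M.A 1 1 :=
    Submodule.smul_mem _ _ (M.nabla_mem M.ell_mem)
  have hb : M.Omega ∈ M.A 2 2 := M.Omega_mem
  have hWsum : M.W t = s • M.nabla M.ell + M.Omega := rfl
  have e2 : ((-1 : ℂ)) ^ (1 + 1) = 1 := by norm_num
  have e4 : ((-1 : ℂ)) ^ (2 + 2) = 1 := by norm_num
  have hnW : ∀ y ∈ T, M.nabla (M.W t * y) = M.nabla (M.W t) * y + M.W t * M.nabla y := by
    intro y hy
    refine Submodule.iSup_induction
      (motive := fun y => M.nabla (M.W t * y) = M.nabla (M.W t) * y + M.W t * M.nabla y)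
      _ hy (fun p x hx => ?_) (by simp) ?_
    · beta_reduce
      rw [hWsum, add_mul, map_add, hnabla_deriv ha hx, hnabla_deriv hb hx, map_add, add_mul,
        add_mul, e2, e4, one_smul, one_smul]
      abel
    · intro x y hx hy
      simp only [mul_add, map_add, hx, hy]
      abel
  have hiW : ∀ y ∈ T, M.iota (M.W t * y) = M.iota (M.W t) * y + M.W t * M.iota y := by
    intro y hy
    refine Submodule.iSup_induction
      (motive := fun y => M.iota (M.W t * y) = M.iota (M.W t) * y + M.W t * M.iota y)
      _ hy (fun p x hx => ?_) (by simp) ?_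
    · beta_reduce
      rw [hWsum, add_mul, map_add, hiota_deriv ha hx, hiota_deriv hb hx, map_add, add_mul,
        add_mul, e2, e4, one_smul, one_smul]
      abel
    · intro x y hx hy
      simp only [mul_add, map_add, hx, hy]
      abel
  have hWT : ∀ y ∈ T, M.W t * y ∈ T := by
    intro y hy
    refine Submodule.iSup_induction (motive := fun y => M.W t * y ∈ T)
      _ hy (fun p x hx => ?_) (by simp) ?_
    · beta_reduce
      rw [hWsum, add_mul]
      exact add_mem (hmemT (M.mul_mem ha hx)) (hmemT (M.mul_mem hb hx))
    · intro x y hx hy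
      rw [mul_add]
      exact add_mem hx hy
  have hDW : M.nabla (M.W t) = s • M.iota (M.W t) := by
    rw [hWsum]
    simp only [map_add, map_smul, h2, hBianchi, h1, smul_zero, add_zero, zero_add]
  have hpow : ∀ k : ℕ, M.W t ^ k ∈ T ∧
      M.nabla (M.W t ^ k) = s • M.iota (M.W t ^ k) := by
    intro k
    induction k with
    | zero => exact ⟨by simpa using hmemT hone, by simp [hn1, hi1]⟩
    | succ k ih =>
      obtain ⟨hmem, heq⟩ := ih
      refine ⟨by rw [pow_succ']; exact hWT _ hmem, ?_⟩
      rw [pow_succ', hnW _ hmem, hiW _ hmem, hDW, heq]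
      simp only [smul_add, smul_mul_assoc, mul_smul_comm]
  have hfin : M.nabla (M.fCalc f t) = s • M.iota (M.fCalc f t) := by
    unfold Model.fCalc
    rw [map_sum, map_sum, Finset.smul_sum]
    refine Finset.sum_congr rfl fun k _ => ?_
    rw [map_smul, map_smul, (hpow k).2, smul_comm]
  rw [hfin, sub_self]
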